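/- Let 0 < a < 1, 0 < ε < 1, h_n = (a+εn²)/2, ω_n = √(h_n² − n²) for n > 1/ε. Then for all t ≥ 0, ∑_{n > 1/ε} e^{-h_n t} sinh(ω_n t)/(n² ω_n) ≤ ζ(2) · t · e^{-t/(2ε)}. -/

import Mathlib

/-!
Write `h = (a + ε n²)/2` and `ω = √(h² - n²)`. Since `sinh x ≤ x eˣ`, each term is at most
`t e^{-(h - ω) t} / n²`; this also covers `h < n`, where `ω = 0` and the term is `0`.
The gap `h - ω` is at least `c = 1/(2ε)`: `h ≥ c` because `ε n² ≥ n > 1/ε`, and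
`h² - n² ≤ (h - c)²` reduces to `a ≤ ε n² + 1/(2ε)`, true as `ε n² ≥ ε n > 1 > a`.
Summing `t e^{-t/(2ε)} / n²` over all `n ≥ 1` gives `ζ(2) t e^{-t/(2ε)}`.
-/

open Real

namespace Real

lemma sinh_le_mul_exp (x : ℝ) : sinh x ≤ x * exp x := by
  have hexp : exp (-x) = exp x * exp (-(2 * x)) := by rw [← exp_add]; ring_nf
  rw [sinh_eq, hexp]
  nlinarith [add_one_le_exp (-(2 * x)), exp_pos x]

lemma exp_neg_mul_mul_sinh_div_le {h ω t : ℝ} (hω : 0 ≤ ω) (ht : 0 ≤ t) :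
    exp (-h * t) * sinh (ω * t) / ω ≤ t * exp (-(h - ω) * t) := by
  rcases hω.eq_or_lt with rfl | hω
  · simp only [div_zero]
    positivity
  rw [div_le_iff₀ hω]
  calc exp (-h * t) * sinh (ω * t)
      ≤ exp (-h * t) * (ω * t * exp (ω * t)) := by
        gcongr
        exact sinh_le_mul_exp _
    _ = t * exp (-(h - ω) * t) * ω := by
        rw [show -(h - ω) * t = -h * t + ω * t by ring, exp_add]
        ring

lemma sqrt_sq_sub_sq_le_sub {h x c : ℝ} (hc : c ≤ h) (hx : 2 * h * c ≤ x ^ 2 + c ^ 2) :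
    √(h ^ 2 - x ^ 2) ≤ h - c :=
  sqrt_le_iff.mpr ⟨sub_nonneg.mpr hc, by nlinarith⟩

end Real

lemma one_div_two_mul_le_sub_sqrt {a ε : ℝ} {n : ℕ} (ha : 0 ≤ a) (ha1 : a < 1) (hε : 0 < ε)
    (hn : 1 / ε < n) :
    1 / (2 * ε) ≤ (a + ε * n ^ 2) / 2 - √(((a + ε * n ^ 2) / 2) ^ 2 - (n : ℝ) ^ 2) := by
  have hεn : 1 < ε * n := by rwa [div_lt_iff₀' hε] at hn
  have hn1 : (1 : ℝ) ≤ n :=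
    Nat.one_le_cast.mpr (Nat.cast_pos.mp ((by positivity : (0 : ℝ) < 1 / ε).trans hn))
  have hεn2 : ε * n ≤ ε * n ^ 2 := by nlinarith
  suffices √(((a + ε * n ^ 2) / 2) ^ 2 - (n : ℝ) ^ 2) ≤ (a + ε * n ^ 2) / 2 - 1 / (2 * ε) by
    linarith
  apply Real.sqrt_sq_sub_sq_le_sub
  · rw [div_le_iff₀ (by positivity)]
    nlinarith
  · have hdiff : (n : ℝ) ^ 2 + (1 / (2 * ε)) ^ 2 - 2 * ((a + ε * n ^ 2) / 2) * (1 / (2 * ε))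
        = (1 + 2 * ε * (ε * n ^ 2 - a)) / (4 * ε ^ 2) := by
      field_simp
      ring
    have ha_le : 0 ≤ ε * n ^ 2 - a := by linarith
    have : 0 ≤ (1 + 2 * ε * (ε * n ^ 2 - a)) / (4 * ε ^ 2) := by positivity
    linarith

lemma tail_term_le {a ε t : ℝ} (ha : 0 ≤ a) (ha1 : a < 1) (hε : 0 < ε) (ht : 0 ≤ t) (n : ℕ) :
    (if (1 : ℝ) / ε < n then
        exp (-((a + ε * n ^ 2) / 2) * t) *
          sinh (√(((a + ε * n ^ 2) / 2) ^ 2 - (n : ℝ) ^ 2) * t) /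
          ((n : ℝ) ^ 2 * √(((a + ε * n ^ 2) / 2) ^ 2 - (n : ℝ) ^ 2))
      else 0) ≤ t * exp (-t / (2 * ε)) * (1 / (n : ℝ) ^ 2) := by
  split_ifs with hn
  · set h := (a + ε * n ^ 2) / 2
    set ω := √(h ^ 2 - (n : ℝ) ^ 2)
    have hgap : 1 / (2 * ε) ≤ h - ω := one_div_two_mul_le_sub_sqrt ha ha1 hε hn
    rw [div_mul_eq_div_div_swap, ← div_eq_mul_one_div]
    gcongr
    calc exp (-h * t) * sinh (ω * t) / ω
        ≤ t * exp (-(h - ω) * t) := exp_neg_mul_mul_sinh_div_le (sqrt_nonneg _) ht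
      _ ≤ t * exp (-t / (2 * ε)) := by
        gcongr
        calc -(h - ω) * t ≤ -(1 / (2 * ε)) * t := by gcongr
          _ = -t / (2 * ε) := by ring
  · positivity

theorem tail_sum_sinh_bound_general (a ε : ℝ) (ha : 0 < a) (ha1 : a < 1)
    (hε : 0 < ε) (t : ℝ) (ht : 0 ≤ t) :
    (∑' n : ℕ, if (1 : ℝ) / ε < n then
        Real.exp (-((a + ε * n ^ 2) / 2) * t) *
          Real.sinh (Real.sqrt (((a + ε * n ^ 2) / 2) ^ 2 - (n : ℝ) ^ 2) * t) /
          ((n : ℝ) ^ 2 * Real.sqrt (((a + ε * n ^ 2) / 2) ^ 2 - (n : ℝ) ^ 2))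
      else 0) ≤ (Real.pi ^ 2 / 6) * t * Real.exp (-t / (2 * ε)) := by
  have hzeta := hasSum_zeta_two.mul_left (t * exp (-t / (2 * ε)))
  have hle := tail_term_le ha.le ha1 hε ht
  refine (Summable.tsum_le_tsum hle ?_ hzeta.summable).trans_eq ?_
  · exact hzeta.summable.of_nonneg_of_le (fun n => by split_ifs <;> positivity) hle
  · rw [hzeta.tsum_eq]
    ring

theorem tail_sum_sinh_bound (a ε : ℝ) (ha : 0 < a) (ha1 : a < 1)
    (hε : 0 < ε) (hε1 : ε < 1) (t : ℝ) (ht : 0 ≤ t) :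
    (∑' n : ℕ, if (1 : ℝ) / ε < n then
        Real.exp (-((a + ε * n ^ 2) / 2) * t) *
          Real.sinh (Real.sqrt (((a + ε * n ^ 2) / 2) ^ 2 - (n : ℝ) ^ 2) * t) /
          ((n : ℝ) ^ 2 * Real.sqrt (((a + ε * n ^ 2) / 2) ^ 2 - (n : ℝ) ^ 2))
      else 0) ≤ (Real.pi ^ 2 / 6) * t * Real.exp (-t / (2 * ε)) :=
  tail_sum_sinh_bound_general a ε ha ha1 hε t ht
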